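/- arXiv:1710.09771 — 2 statements merged into one kernel-verified Lean document; each statement's English description precedes it below -/
import Mathlib

section
/- Let φ ∈ 𝐂, T > 0, and suppose x ∈ C([-τ,T],ℝ^d) satisfies I_T^φ(x) < ∞. Then for all t ∈ [0,T], ‖x − x^φ‖²_{[-τ,t]} ≤ 4 I_T^φ(x) κ₂ (1 + ‖x‖²_{[-τ,t]}) t exp(2κ₁ t²), where ‖y‖_{[-τ,t]} = sup_{s∈[-τ,t]}|y(s)|. -/
/-!
Put `y = x - x^φ` and fix a control `u` of `x`. Then `y` vanishes on `[-τ,0]`, and for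
`0 ≤ p ≤ T` it is the sum of `∫₀ᵖ (b(x_s) - b(x^φ_s)) ds` and `∫₀ᵖ σ(x_s) u(s) ds`. By
Cauchy–Schwarz and the Lipschitz and growth bounds, the squared norms of these two integrals are
at most `κ₁ t ∫₀ʳ ‖y‖²_{[-τ,s]} ds` and `κ₂ (1 + ‖x‖²_{[-τ,t]}) t ∫₀ᵀ |u|²` when `p ≤ r ≤ t`.
Hence `f(r) = ‖y‖²_{[-τ,r]}` satisfies
`f(r) ≤ 2κ₁ t ∫₀ʳ f + 2κ₂ (1 + ‖x‖²_{[-τ,t]}) t ∫₀ᵀ |u|²` on `[0,t]`, and Grönwall's inequality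
gives the bound with `½∫₀ᵀ |u|²` in place of `I_T^φ(x)`. Taking the infimum over `u` finishes
the proof.
-/

open MeasureTheory Set Metric
open scoped ENNReal

noncomputable section

/-- `ℝ^d`. -/
abbrev Vec (d : ℕ) := EuclideanSpace ℝ (Fin d)

/-- The state space `𝐂 = C([-τ,0],ℝ^d)`. -/
abbrev Hist (τ : ℝ) (d : ℕ) := C(Icc (-τ) (0:ℝ), Vec d)

/-- The path space `C([-τ,T],ℝ^d)`. -/
abbrev Traj (τ T : ℝ) (d : ℕ) := C(Icc (-τ) T, Vec d)

/-- Matrix acting on a vector. -/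
def matVec {d m : ℕ} (M : Matrix (Fin d) (Fin m) ℝ) (v : Vec m) : Vec d :=
  WithLp.toLp 2 (fun i => ∑ j, M i j * v j)

/-- Squared Frobenius norm of a matrix. -/
def frobSq {d m : ℕ} (M : Matrix (Fin d) (Fin m) ℝ) : ℝ := ∑ i, ∑ j, (M i j) ^ 2

/-- Frobenius norm of a matrix. -/
def frobNorm {d m : ℕ} (M : Matrix (Fin d) (Fin m) ℝ) : ℝ := Real.sqrt (frobSq M)

/-- Evaluation of a path at a time `t ∈ [-τ,T]` (clamped). -/
def ev {d : ℕ} {τ T : ℝ} (h : -τ ≤ T) (x : Traj τ T d) (t : ℝ) : Vec d :=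
  x (projIcc (-τ) T h t)

/-- The history segment `x_t ∈ 𝐂` of a path `x ∈ C([-τ,T],ℝ^d)`, for `t ∈ [0,T]`. -/
def seg {d : ℕ} {τ T : ℝ} (h : -τ ≤ T) (x : Traj τ T d) (t : ℝ) : Hist τ d :=
  ⟨fun s => x (projIcc (-τ) T h (t + s.1)),
    x.continuous.comp <| continuous_projIcc.comp <| continuous_const.add continuous_subtype_val⟩

/-- The uniform Lipschitz assumption on the coefficients:
`|b(φ)−b(ψ)|² + |σ(φ)−σ(ψ)|² ≤ κ₁ ‖φ−ψ‖²`. -/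
def LipCoeff {d m : ℕ} {τ : ℝ} (b : Hist τ d → Vec d)
    (σ' : Hist τ d → Matrix (Fin d) (Fin m) ℝ) (κ₁ : ℝ) : Prop :=
  ∀ φ ψ : Hist τ d, ‖b φ - b ψ‖ ^ 2 + frobSq (σ' φ - σ' ψ) ≤ κ₁ * ‖φ - ψ‖ ^ 2

/-- The linear growth bound `|b(φ)|² + |σ(φ)|² ≤ κ₂ (1 + ‖φ‖²)`. -/
def GrowthCoeff {d m : ℕ} {τ : ℝ} (b : Hist τ d → Vec d)
    (σ' : Hist τ d → Matrix (Fin d) (Fin m) ℝ) (κ₂ : ℝ) : Prop :=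
  ∀ φ : Hist τ d, ‖b φ‖ ^ 2 + frobSq (σ' φ) ≤ κ₂ * (1 + ‖φ‖ ^ 2)

/-- The set `U_T(x)` of controls `u ∈ L²([0,T],ℝ^m)` satisfying
`x(t) = x(0) + ∫₀ᵗ b(x_s) ds + ∫₀ᵗ σ(x_s) u(s) ds` for `t ∈ [0,T]`. -/
def controls {d m : ℕ} {τ T : ℝ} (h : -τ ≤ T) (b : Hist τ d → Vec d)
    (σ' : Hist τ d → Matrix (Fin d) (Fin m) ℝ) (x : Traj τ T d) : Set (ℝ → Vec m) :=
  {u | MemLp u 2 (volume.restrict (Icc 0 T)) ∧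
    ∀ t ∈ Icc (0:ℝ) T,
      ev h x t = ev h x 0 + (∫ s in (0:ℝ)..t, b (seg h x s)) +
        ∫ s in (0:ℝ)..t, matVec (σ' (seg h x s)) (u s)}

/-- The rate function `I_T(x) = inf_{u ∈ U_T(x)} ½∫₀ᵀ |u(s)|² ds` (with value `∞` if
`U_T(x) = ∅`). -/
def rate {d m : ℕ} {τ T : ℝ} (h : -τ ≤ T) (b : Hist τ d → Vec d)
    (σ' : Hist τ d → Matrix (Fin d) (Fin m) ℝ) (x : Traj τ T d) : ℝ≥0∞ :=
  ⨅ (u : ℝ → Vec m) (_ : u ∈ controls h b σ' x),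
    ENNReal.ofReal ((1/2) * ∫ s in (0:ℝ)..T, ‖u s‖ ^ 2)

open Classical in
/-- The rate function `I_T^φ(x)`, which is `I_T(x)` if `x₀ = φ` and `∞` otherwise. -/
def rateAt {d m : ℕ} {τ T : ℝ} (h : -τ ≤ T) (b : Hist τ d → Vec d)
    (σ' : Hist τ d → Matrix (Fin d) (Fin m) ℝ) (φ : Hist τ d) (x : Traj τ T d) : ℝ≥0∞ :=
  if seg h x 0 = φ then rate h b σ' x else ⊤

/-- The supremum norm `‖x‖_{[-τ,t]} = sup_{s ∈ [-τ,t]} |x(s)|` of a path. -/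
def supNormOn {d : ℕ} {τ T : ℝ} (h : -τ ≤ T) (x : Traj τ T d) (t : ℝ) : ℝ :=
  sSup ((fun s => ‖ev h x s‖) '' Icc (-τ) t)

theorem sq_integral_le_measureReal_mul_integral_sq {α : Type*} [MeasurableSpace α]
    {μ : Measure α} [IsFiniteMeasure μ] {g : α → ℝ} (hg : MemLp g 2 μ) :
    (∫ a, g a ∂μ) ^ 2 ≤ μ.real univ * ∫ a, g a ^ 2 ∂μ := by
  rcases eq_zero_or_neZero μ with rfl | hμ
  · simp
  have jensen := (Even.convexOn_pow (𝕜 := ℝ) even_two).map_average_le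
    (continuous_pow 2).continuousOn isClosed_univ (Filter.Eventually.of_forall fun _ => mem_univ _)
    (hg.integrable one_le_two) hg.integrable_sq
  simp only [average_eq, smul_eq_mul] at jensen
  have hL : 0 < μ.real univ := measureReal_univ_pos
  field_simp at jensen
  exact jensen

theorem norm_intervalIntegral_sq_le {E : Type*} [NormedAddCommGroup E] [NormedSpace ℝ E]
    {F : ℝ → E} {g : ℝ → ℝ} {a b : ℝ} (hab : a ≤ b) (hg : IntervalIntegrable g volume a b)
    (hFg : ∀ s ∈ Ioc a b, ‖F s‖ ^ 2 ≤ g s) :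
    ‖∫ s in a..b, F s‖ ^ 2 ≤ (b - a) * ∫ s in a..b, g s := by
  have hg0 : ∀ s ∈ Ioc a b, 0 ≤ g s := fun s hs => (sq_nonneg _).trans (hFg s hs)
  have hsqrt : MemLp (fun s => √(g s)) 2 (volume.restrict (Ioc a b)) := by
    refine (memLp_two_iff_integrable_sq
      (Real.continuous_sqrt.comp_aestronglyMeasurable hg.1.aestronglyMeasurable)).2 <|
        hg.1.congr ?_
    filter_upwards [ae_restrict_mem measurableSet_Ioc] with s hs
    exact (Real.sq_sqrt (hg0 s hs)).symm
  calc ‖∫ s in a..b, F s‖ ^ 2 ≤ (∫ s in Ioc a b, √(g s)) ^ 2 := by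
        gcongr
        refine (intervalIntegral.norm_integral_le_integral_norm hab).trans ?_
        rw [intervalIntegral.integral_of_le hab]
        refine integral_mono_of_nonneg (Filter.Eventually.of_forall fun _ => norm_nonneg _)
          (hsqrt.integrable one_le_two) ?_
        filter_upwards [ae_restrict_mem measurableSet_Ioc] with s hs
        exact Real.le_sqrt_of_sq_le (hFg s hs)
    _ ≤ (volume.restrict (Ioc a b)).real univ * ∫ s in Ioc a b, √(g s) ^ 2 :=
        sq_integral_le_measureReal_mul_integral_sq hsqrt
    _ = (b - a) * ∫ s in a..b, g s := by
        rw [measureReal_restrict_apply_univ, Real.volume_real_Ioc_of_le hab,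
          intervalIntegral.integral_of_le hab]
        congr 1
        exact setIntegral_congr_fun measurableSet_Ioc fun s hs => Real.sq_sqrt (hg0 s hs)

theorem continuousOn_sSup_image_Icc {w : ℝ → ℝ} (hw : Continuous w) (a : ℝ) :
    ContinuousOn (fun t => sSup (w '' Icc a t)) (Ici a) := by
  have hc : Continuous fun t => sSup ((fun θ => w (a + θ * (t - a))) '' Icc (0 : ℝ) 1) :=
    isCompact_Icc.continuous_sSup (by fun_prop)
  refine hc.continuousOn.congr fun t (ht : a ≤ t) => ?_
  rw [← segment_eq_Icc ht, segment_eq_image', image_image]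
  simp only [smul_eq_mul]

theorem mul_gronwallBound_zero_add (K A x : ℝ) :
    K * gronwallBound 0 K A x + A = A * Real.exp (K * x) := by
  rcases eq_or_ne K 0 with rfl | hK
  · simp
  · rw [gronwallBound_of_K_ne_0 hK]
    field_simp
    ring

theorem le_mul_exp_of_le_mul_integral_add {f : ℝ → ℝ} {K A a b : ℝ} (hK : 0 ≤ K) (hab : a ≤ b)
    (hf : ContinuousOn f (Icc a b)) (bound : ∀ r ∈ Icc a b, f r ≤ K * (∫ s in a..r, f s) + A) :
    f b ≤ A * Real.exp (K * (b - a)) := by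
  -- `F` extends `f` continuously to `ℝ`, so that its primitive is differentiable everywhere.
  set F : ℝ → ℝ := fun s => f (projIcc a b hab s)
  have hF : Continuous F := hf.comp_continuous (continuous_subtype_val.comp continuous_projIcc)
    fun s => (projIcc a b hab s).2
  have hFf : ∀ s ∈ Icc a b, F s = f s := fun s hs => by simp [F, projIcc_of_mem hab hs]
  have hint : ∀ r ∈ Icc a b, ∫ s in a..r, f s = ∫ s in a..r, F s := fun r hr =>
    intervalIntegral.integral_congr fun s hs => by
      rw [uIcc_of_le hr.1] at hs
      exact (hFf s ⟨hs.1, hs.2.trans hr.2⟩).symm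
  have hderiv : ∀ r, HasDerivAt (fun r => ∫ s in a..r, F s) (F r) r := fun r =>
    (hF.integral_hasStrictDerivAt a r).hasDerivAt
  have hG : ∀ r ∈ Icc a b, ∫ s in a..r, F s ≤ gronwallBound 0 K A (r - a) := by
    refine le_gronwallBound_of_liminf_deriv_right_le (f' := F)
      (fun r _ => (hderiv r).continuousAt.continuousWithinAt)
      (fun r _ _ hr => (hderiv r).hasDerivWithinAt.liminf_right_slope_le hr) (by simp)
      fun r hr => ?_
    have hr' : r ∈ Icc a b := Ico_subset_Icc_self hr
    rw [hFf r hr', ← hint r hr']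
    exact bound r hr'
  calc f b ≤ K * (∫ s in a..b, f s) + A := bound b ⟨hab, le_rfl⟩
    _ ≤ K * gronwallBound 0 K A (b - a) + A := by
        gcongr; exact (hint b ⟨hab, le_rfl⟩).trans_le (hG b ⟨hab, le_rfl⟩)
    _ = A * Real.exp (K * (b - a)) := mul_gronwallBound_zero_add K A _

section SupNorm

variable {d : ℕ} {τ T : ℝ} (h : -τ ≤ T) (x : Traj τ T d)

theorem continuous_ev : Continuous (ev h x) :=
  x.continuous.comp continuous_projIcc

theorem continuous_seg : Continuous (seg h x) :=
  ContinuousMap.continuous_of_continuous_uncurry _ <| x.continuous.comp <|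
    continuous_projIcc.comp <| continuous_fst.add (continuous_subtype_val.comp continuous_snd)

theorem supNormOn_nonneg (t : ℝ) : 0 ≤ supNormOn h x t :=
  Real.sSup_nonneg <| by rintro _ ⟨p, -, rfl⟩; exact norm_nonneg _

theorem norm_ev_le_supNormOn {p t : ℝ} (hp : p ∈ Icc (-τ) t) : ‖ev h x p‖ ≤ supNormOn h x t :=
  le_csSup (isCompact_Icc.image (continuous_norm.comp (continuous_ev h x))).bddAbove
    ⟨p, hp, rfl⟩

theorem supNormOn_sq_le {t C : ℝ} (hC : 0 ≤ C) (hx : ∀ p ∈ Icc (-τ) t, ‖ev h x p‖ ^ 2 ≤ C) :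
    supNormOn h x t ^ 2 ≤ C := by
  have : supNormOn h x t ≤ √C :=
    Real.sSup_le (by rintro _ ⟨p, hp, rfl⟩; exact Real.le_sqrt_of_sq_le (hx p hp))
      (Real.sqrt_nonneg C)
  calc supNormOn h x t ^ 2 ≤ √C ^ 2 := by gcongr; exact supNormOn_nonneg h x t
    _ = C := Real.sq_sqrt hC

theorem norm_seg_le_supNormOn {s t : ℝ} (hs : 0 ≤ s) (hst : s ≤ t) :
    ‖seg h x s‖ ≤ supNormOn h x t :=
  (ContinuousMap.norm_le _ (supNormOn_nonneg h x t)).2 fun q =>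
    norm_ev_le_supNormOn h x ⟨by linarith [q.2.1], by linarith [q.2.2]⟩

theorem continuousOn_supNormOn : ContinuousOn (supNormOn h x) (Ici (-τ)) :=
  continuousOn_sSup_image_Icc (continuous_norm.comp (continuous_ev h x)) (-τ)

end SupNorm

section Coefficients

variable {d m : ℕ} {τ : ℝ} {b : Hist τ d → Vec d} {σ' : Hist τ d → Matrix (Fin d) (Fin m) ℝ}

theorem frobSq_nonneg (M : Matrix (Fin d) (Fin m) ℝ) : 0 ≤ frobSq M :=
  Finset.sum_nonneg fun _ _ => Finset.sum_nonneg fun _ _ => sq_nonneg _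

theorem norm_matVec_sq_le (M : Matrix (Fin d) (Fin m) ℝ) (v : Vec m) :
    ‖matVec M v‖ ^ 2 ≤ frobSq M * ‖v‖ ^ 2 := by
  rw [EuclideanSpace.norm_sq_eq, EuclideanSpace.norm_sq_eq, frobSq, Finset.sum_mul]
  simp only [matVec, Real.norm_eq_abs, sq_abs]
  exact Finset.sum_le_sum fun i _ => Finset.sum_mul_sq_le_sq_mul_sq _ _ _

theorem LipCoeff.norm_sub_sq_le {κ₁ : ℝ} (hlip : LipCoeff b σ' κ₁) (φ ψ : Hist τ d) :
    ‖b φ - b ψ‖ ^ 2 ≤ κ₁ * ‖φ - ψ‖ ^ 2 :=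
  (le_add_of_nonneg_right (frobSq_nonneg _)).trans (hlip φ ψ)

theorem LipCoeff.continuous {κ₁ : ℝ} (hlip : LipCoeff b σ' κ₁) : Continuous b := by
  refine (LipschitzWith.of_dist_le_mul (K := (√κ₁).toNNReal) fun φ ψ => ?_).continuous
  rw [dist_eq_norm, dist_eq_norm, Real.coe_toNNReal _ (Real.sqrt_nonneg _),
    ← Real.sqrt_sq (norm_nonneg (φ - ψ)), ← Real.sqrt_mul' _ (sq_nonneg _)]
  exact Real.le_sqrt_of_sq_le (hlip.norm_sub_sq_le φ ψ)

theorem GrowthCoeff.nonneg {κ₂ : ℝ} (hgrowth : GrowthCoeff b σ' κ₂) : 0 ≤ κ₂ := by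
  have h0 := hgrowth 0
  rw [norm_zero, zero_pow two_ne_zero, add_zero, mul_one] at h0
  exact (add_nonneg (sq_nonneg _) (frobSq_nonneg _)).trans h0

theorem GrowthCoeff.frobSq_le {κ₂ : ℝ} (hgrowth : GrowthCoeff b σ' κ₂) (φ : Hist τ d) :
    frobSq (σ' φ) ≤ κ₂ * (1 + ‖φ‖ ^ 2) :=
  (le_add_of_nonneg_left (sq_nonneg _)).trans (hgrowth φ)

end Coefficients

section Trajectories

variable {d m : ℕ} {τ T : ℝ} (h : -τ ≤ T) {b : Hist τ d → Vec d}
  {σ' : Hist τ d → Matrix (Fin d) (Fin m) ℝ} {κ₁ κ₂ : ℝ} {x xφ : Traj τ T d} {u : ℝ → Vec m}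

theorem ev_sub (x y : Traj τ T d) (p : ℝ) : ev h (x - y) p = ev h x p - ev h y p := rfl

theorem seg_sub (x y : Traj τ T d) (s : ℝ) : seg h (x - y) s = seg h x s - seg h y s := rfl

theorem ev_eq_of_seg_zero_eq (h0 : seg h x 0 = seg h xφ 0) {p : ℝ} (hp : p ∈ Icc (-τ) 0) :
    ev h x p = ev h xφ p := by
  simpa [seg, ev] using ContinuousMap.congr_fun h0 ⟨p, hp⟩

theorem intervalIntegrable_supNormOn_sq (hτ : 0 ≤ τ) (x : Traj τ T d) {r : ℝ} (hr : 0 ≤ r) :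
    IntervalIntegrable (fun s => supNormOn h x s ^ 2) volume 0 r :=
  ContinuousOn.intervalIntegrable <| ((continuousOn_supNormOn h x).pow 2).mono fun s hs => by
    rw [uIcc_of_le hr] at hs
    exact (neg_nonpos.2 hτ).trans hs.1

theorem integrableOn_norm_sq_of_mem_controls (hu : u ∈ controls h b σ' x) :
    IntegrableOn (fun s => ‖u s‖ ^ 2) (Icc 0 T) :=
  (memLp_two_iff_integrable_sq_norm hu.1.1).1 hu.1

theorem ev_sub_eq_integral_add_integral (hb : Continuous b) (hu : u ∈ controls h b σ' x)
    (hxφ : ∀ t ∈ Icc (0:ℝ) T, ev h xφ t = ev h xφ 0 + ∫ s in (0:ℝ)..t, b (seg h xφ s))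
    (h0 : ev h x 0 = ev h xφ 0) {p : ℝ} (hp : p ∈ Icc 0 T) :
    ev h (x - xφ) p = (∫ s in (0:ℝ)..p, (b (seg h x s) - b (seg h xφ s))) +
      ∫ s in (0:ℝ)..p, matVec (σ' (seg h x s)) (u s) := by
  rw [ev_sub, hu.2 p hp, hxφ p hp, h0, intervalIntegral.integral_sub (f := fun s => b (seg h x s))
    (g := fun s => b (seg h xφ s))
    ((hb.comp (continuous_seg h x)).intervalIntegrable 0 p)
    ((hb.comp (continuous_seg h xφ)).intervalIntegrable 0 p)]
  abel

theorem norm_integral_drift_sq_le (hτ : 0 ≤ τ) (hκ₁ : 0 ≤ κ₁) (hlip : LipCoeff b σ' κ₁)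
    {p r : ℝ} (hp : 0 ≤ p) (hpr : p ≤ r) :
    ‖∫ s in (0:ℝ)..p, (b (seg h x s) - b (seg h xφ s))‖ ^ 2 ≤
      p * κ₁ * ∫ s in (0:ℝ)..r, supNormOn h (x - xφ) s ^ 2 := by
  have hM : ∀ q, 0 ≤ q → IntervalIntegrable (fun s => supNormOn h (x - xφ) s ^ 2) volume 0 q :=
    fun q hq => intervalIntegrable_supNormOn_sq h hτ (x - xφ) hq
  have hCS := norm_intervalIntegral_sq_le hp ((hM p hp).const_mul κ₁) fun s hs => calc
    ‖b (seg h x s) - b (seg h xφ s)‖ ^ 2 ≤ κ₁ * ‖seg h (x - xφ) s‖ ^ 2 := by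
      rw [seg_sub]; exact hlip.norm_sub_sq_le _ _
    _ ≤ κ₁ * supNormOn h (x - xφ) s ^ 2 := by
      gcongr; exact norm_seg_le_supNormOn h _ hs.1.le le_rfl
  rw [intervalIntegral.integral_const_mul, sub_zero, ← mul_assoc] at hCS
  exact hCS.trans <| mul_le_mul_of_nonneg_left
    (intervalIntegral.integral_mono_interval le_rfl hp hpr
      (Filter.Eventually.of_forall fun _ => sq_nonneg _) (hM r (hp.trans hpr)))
    (by positivity)

theorem norm_integral_control_sq_le (hgrowth : GrowthCoeff b σ' κ₂)
    (hu : u ∈ controls h b σ' x) {p t : ℝ} (hp : 0 ≤ p) (hpt : p ≤ t) (htT : t ≤ T) :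
    ‖∫ s in (0:ℝ)..p, matVec (σ' (seg h x s)) (u s)‖ ^ 2 ≤
      p * (κ₂ * (1 + supNormOn h x t ^ 2)) * ∫ s in (0:ℝ)..T, ‖u s‖ ^ 2 := by
  have hκ₂ := hgrowth.nonneg
  have hu2 : ∀ q ∈ Icc 0 T, IntervalIntegrable (fun s => ‖u s‖ ^ 2) volume 0 q := fun q hq =>
    (intervalIntegrable_iff_integrableOn_Ioc_of_le hq.1).2 <|
      (integrableOn_norm_sq_of_mem_controls h hu).mono_set fun s hs => ⟨hs.1.le, hs.2.trans hq.2⟩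
  have hCS := norm_intervalIntegral_sq_le hp
    ((hu2 p ⟨hp, hpt.trans htT⟩).const_mul (κ₂ * (1 + supNormOn h x t ^ 2))) fun s hs => calc
    ‖matVec (σ' (seg h x s)) (u s)‖ ^ 2 ≤ frobSq (σ' (seg h x s)) * ‖u s‖ ^ 2 :=
      norm_matVec_sq_le _ _
    _ ≤ κ₂ * (1 + ‖seg h x s‖ ^ 2) * ‖u s‖ ^ 2 := by gcongr; exact hgrowth.frobSq_le _
    _ ≤ κ₂ * (1 + supNormOn h x t ^ 2) * ‖u s‖ ^ 2 := by
      gcongr; exact norm_seg_le_supNormOn h x hs.1.le (hs.2.trans hpt)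
  rw [intervalIntegral.integral_const_mul, sub_zero, ← mul_assoc] at hCS
  exact hCS.trans <| mul_le_mul_of_nonneg_left
    (intervalIntegral.integral_mono_interval le_rfl hp (hpt.trans htT)
      (Filter.Eventually.of_forall fun _ => sq_nonneg _) (hu2 T ⟨hp.trans (hpt.trans htT), le_rfl⟩))
    (by positivity)

theorem norm_ev_sub_sq_le (hτ : 0 ≤ τ) (hκ₁ : 0 ≤ κ₁) (hlip : LipCoeff b σ' κ₁)
    (hgrowth : GrowthCoeff b σ' κ₂) (hu : u ∈ controls h b σ' x)
    (hxφ : ∀ t ∈ Icc (0:ℝ) T, ev h xφ t = ev h xφ 0 + ∫ s in (0:ℝ)..t, b (seg h xφ s))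
    (h0 : seg h x 0 = seg h xφ 0) {p r t : ℝ} (hp : p ∈ Ioc 0 r) (hrt : r ≤ t) (htT : t ≤ T) :
    ‖ev h (x - xφ) p‖ ^ 2 ≤
      2 * κ₁ * t * (∫ s in (0:ℝ)..r, supNormOn h (x - xφ) s ^ 2) +
        2 * κ₂ * (1 + supNormOn h x t ^ 2) * t * ∫ s in (0:ℝ)..T, ‖u s‖ ^ 2 := by
  have hpt : p ≤ t := hp.2.trans hrt
  rw [ev_sub_eq_integral_add_integral h hlip.continuous hu hxφ
    (ev_eq_of_seg_zero_eq h h0 ⟨neg_nonpos.2 hτ, le_rfl⟩) ⟨hp.1.le, hpt.trans htT⟩]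
  set B := ∫ s in (0:ℝ)..p, (b (seg h x s) - b (seg h xφ s))
  set C := ∫ s in (0:ℝ)..p, matVec (σ' (seg h x s)) (u s)
  have hB := norm_integral_drift_sq_le h (x := x) (xφ := xφ) hτ hκ₁ hlip hp.1.le hp.2
  have hC := norm_integral_control_sq_le h hgrowth hu hp.1.le hpt htT
  have hIM : 0 ≤ ∫ s in (0:ℝ)..r, supNormOn h (x - xφ) s ^ 2 :=
    intervalIntegral.integral_nonneg (hp.1.le.trans hp.2) fun _ _ => sq_nonneg _
  have hIu : 0 ≤ ∫ s in (0:ℝ)..T, ‖u s‖ ^ 2 :=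
    intervalIntegral.integral_nonneg (hp.1.le.trans (hpt.trans htT)) fun _ _ => sq_nonneg _
  have hκ₂ := hgrowth.nonneg
  have hS : 0 ≤ κ₂ * (1 + supNormOn h x t ^ 2) := by positivity
  calc ‖B + C‖ ^ 2 ≤ 2 * ‖B‖ ^ 2 + 2 * ‖C‖ ^ 2 := by
        nlinarith [norm_add_le B C, norm_nonneg (B + C), sq_nonneg (‖B‖ - ‖C‖)]
    _ ≤ _ := by nlinarith [mul_le_mul_of_nonneg_right hpt (mul_nonneg hκ₁ hIM),
        mul_le_mul_of_nonneg_right hpt (mul_nonneg hS hIu)]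

theorem supNormOn_sub_sq_le_of_mem_controls (hτ : 0 ≤ τ) (hκ₁ : 0 ≤ κ₁)
    (hlip : LipCoeff b σ' κ₁) (hgrowth : GrowthCoeff b σ' κ₂) (hu : u ∈ controls h b σ' x)
    (hxφ : ∀ t ∈ Icc (0:ℝ) T, ev h xφ t = ev h xφ 0 + ∫ s in (0:ℝ)..t, b (seg h xφ s))
    (h0 : seg h x 0 = seg h xφ 0) {t : ℝ} (ht : t ∈ Icc 0 T) :
    supNormOn h (x - xφ) t ^ 2 ≤
      4 * ((1/2) * ∫ s in (0:ℝ)..T, ‖u s‖ ^ 2) * κ₂ * (1 + supNormOn h x t ^ 2) * t *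
        Real.exp (2 * κ₁ * t ^ 2) := by
  set A := 2 * κ₂ * (1 + supNormOn h x t ^ 2) * t * ∫ s in (0:ℝ)..T, ‖u s‖ ^ 2 with hA_def
  have hκ₂ := hgrowth.nonneg
  have ht0 := ht.1
  have hIu : 0 ≤ ∫ s in (0:ℝ)..T, ‖u s‖ ^ 2 :=
    intervalIntegral.integral_nonneg (ht.1.trans ht.2) fun _ _ => sq_nonneg _
  have hA : 0 ≤ A := by positivity
  have hK : 0 ≤ 2 * κ₁ * t := by positivity
  have bound : ∀ r ∈ Icc 0 t, supNormOn h (x - xφ) r ^ 2 ≤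
      2 * κ₁ * t * (∫ s in (0:ℝ)..r, supNormOn h (x - xφ) s ^ 2) + A := by
    intro r hr
    have hIM : 0 ≤ ∫ s in (0:ℝ)..r, supNormOn h (x - xφ) s ^ 2 :=
      intervalIntegral.integral_nonneg hr.1 fun _ _ => sq_nonneg _
    have hC : 0 ≤ 2 * κ₁ * t * (∫ s in (0:ℝ)..r, supNormOn h (x - xφ) s ^ 2) + A := by
      positivity
    refine supNormOn_sq_le h _ hC fun p hp => ?_
    rcases le_or_gt p 0 with hp0 | hp0
    · rw [ev_sub, ev_eq_of_seg_zero_eq h h0 ⟨hp.1, hp0⟩, sub_self, norm_zero, sq, zero_mul]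
      exact hC
    · exact norm_ev_sub_sq_le h hτ hκ₁ hlip hgrowth hu hxφ h0 ⟨hp0, hp.2⟩ hr.2 ht.2
  have hcont : ContinuousOn (fun r => supNormOn h (x - xφ) r ^ 2) (Icc 0 t) :=
    ((continuousOn_supNormOn h _).pow 2).mono fun s hs => (neg_nonpos.2 hτ).trans hs.1
  calc supNormOn h (x - xφ) t ^ 2 ≤ A * Real.exp (2 * κ₁ * t * (t - 0)) :=
        le_mul_exp_of_le_mul_integral_add hK ht.1 hcont bound
    _ = _ := by rw [sub_zero, hA_def]; ring_nf

end Trajectories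

section Rate

variable {d m : ℕ} {τ T : ℝ} (h : -τ ≤ T) {b : Hist τ d → Vec d}
  {σ' : Hist τ d → Matrix (Fin d) (Fin m) ℝ} {x : Traj τ T d}

theorem seg_zero_eq_of_rateAt_ne_top {φ : Hist τ d} (hfin : rateAt h b σ' φ x ≠ ⊤) :
    seg h x 0 = φ := by
  by_contra hne
  exact hfin (if_neg hne)

theorem controls_nonempty_of_rate_ne_top (hrate : rate h b σ' x ≠ ⊤) :
    (controls h b σ' x).Nonempty := by
  by_contra hne
  simp [rate, not_nonempty_iff_eq_empty.1 hne] at hrate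

theorem le_mul_toReal_rate {a c : ℝ} (hc : 0 ≤ c) (hrate : rate h b σ' x ≠ ⊤)
    (hbound : ∀ u ∈ controls h b σ' x, a ≤ c * ((1/2) * ∫ s in (0:ℝ)..T, ‖u s‖ ^ 2)) :
    a ≤ c * (rate h b σ' x).toReal := by
  rcases hc.eq_or_lt with rfl | hc
  · obtain ⟨u, hu⟩ := controls_nonempty_of_rate_ne_top h hrate
    simpa using hbound u hu
  · rw [← div_le_iff₀' hc, ← ENNReal.ofReal_le_iff_le_toReal hrate]
    exact le_iInf₂ fun u hu => ENNReal.ofReal_le_ofReal ((div_le_iff₀' hc).2 (hbound u hu))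

end Rate

theorem stmt_1_general {d m : ℕ} {τ T : ℝ} (hτ : 0 < τ)
    (h : -τ ≤ T)
    (b : Hist τ d → Vec d) (σ' : Hist τ d → Matrix (Fin d) (Fin m) ℝ)
    {κ₁ κ₂ : ℝ} (hκ₁ : 0 < κ₁)
    (hlip : LipCoeff b σ' κ₁) (hgrowth : GrowthCoeff b σ' κ₂)
    (φ : Hist τ d)
    -- `x^φ`: the (unique) solution of the DDE with initial condition `φ`, on `[-τ,T]`
    (xφ : Traj τ T d) (hxφ0 : seg h xφ 0 = φ)
    (hxφ : ∀ t ∈ Icc (0:ℝ) T, ev h xφ t = ev h xφ 0 + ∫ s in (0:ℝ)..t, b (seg h xφ s))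
    (x : Traj τ T d) (hfin : rateAt h b σ' φ x < ⊤) :
    ∀ t ∈ Icc (0:ℝ) T,
      supNormOn h (x - xφ) t ^ 2 ≤
        4 * (rateAt h b σ' φ x).toReal * κ₂ * (1 + supNormOn h x t ^ 2) * t *
          Real.exp (2 * κ₁ * t ^ 2) := by
  intro t ht
  have hx0 : seg h x 0 = φ := seg_zero_eq_of_rateAt_ne_top h hfin.ne
  have hrate : rateAt h b σ' φ x = rate h b σ' x := if_pos hx0
  rw [hrate] at hfin ⊢
  have hκ₂ := hgrowth.nonneg
  have ht0 := ht.1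
  have hc : 0 ≤ 4 * κ₂ * (1 + supNormOn h x t ^ 2) * t * Real.exp (2 * κ₁ * t ^ 2) := by
    positivity
  convert le_mul_toReal_rate h hc hfin.ne fun u hu => ?_ using 1
  · ring
  convert supNormOn_sub_sq_le_of_mem_controls h hτ.le hκ₁.le hlip hgrowth hu hxφ
    (hx0.trans hxφ0.symm) ht using 1
  ring

/-- Lemma 4.2: if `I_T^φ(x) < ∞` then for all `t ∈ [0,T]`,
`‖x − x^φ‖²_{[-τ,t]} ≤ 4 I_T^φ(x) κ₂ (1 + ‖x‖²_{[-τ,t]}) t exp(2κ₁ t²)`. -/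
theorem stmt_1 {d m : ℕ} (hd : 0 < d) (hm : 0 < m) {τ T : ℝ} (hτ : 0 < τ) (hT : 0 < T)
    (h : -τ ≤ T)
    (b : Hist τ d → Vec d) (σ' : Hist τ d → Matrix (Fin d) (Fin m) ℝ)
    {κ₁ κ₂ : ℝ} (hκ₁ : 0 < κ₁) (hκ₂ : 0 < κ₂)
    (hlip : LipCoeff b σ' κ₁) (hgrowth : GrowthCoeff b σ' κ₂)
    (φ : Hist τ d)
    -- `x^φ`: the (unique) solution of the DDE with initial condition `φ`, on `[-τ,T]`
    (xφ : Traj τ T d) (hxφ0 : seg h xφ 0 = φ)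
    (hxφ : ∀ t ∈ Icc (0:ℝ) T, ev h xφ t = ev h xφ 0 + ∫ s in (0:ℝ)..t, b (seg h xφ s))
    (x : Traj τ T d) (hfin : rateAt h b σ' φ x < ⊤) :
    ∀ t ∈ Icc (0:ℝ) T,
      supNormOn h (x - xφ) t ^ 2 ≤
        4 * (rateAt h b σ' φ x).toReal * κ₂ * (1 + supNormOn h x t ^ 2) * t *
          Real.exp (2 * κ₁ * t ^ 2) :=
  stmt_1_general hτ h b σ' hκ₁ hlip hgrowth φ xφ hxφ0 hxφ x hfin
end
end

section
/- Suppose b and σ satisfy the Lipschitz assumption. Let x* be a periodic solution of the DDE with orbit 𝐎, let 𝐃 be a bounded domain in 𝐂 containing 𝐎, and suppose there exists η₀ > 0 such that 𝐁(𝐃,η₀) is uniformly attracted to 𝐎. Let μ > 0 and η₁ ∈ (0, min(μ, η₀)), and for T > 0 define F_T^{η₁} = { x ∈ C([-τ,T],ℝ^d) : x_t ∈ cl(𝐁(𝐃,η₁)) \ 𝐁(𝐎, μ − η₁) for all t ∈ [0,T] }. Then lim_{T→∞} inf_{φ ∈ 𝐒(𝐎,2μ)} I_T^φ(F_T^{η₁})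 = ∞, i.e., for every M > 0 there exists T₀ such that inf_{φ ∈ 𝐒(𝐎,2μ)} inf_{x ∈ F_T^{η₁}} I_T^φ(x) > M for all T ≥ T₀. -/
open MeasureTheory Set Metric
open scoped ENNReal

noncomputable section

/-- The history segment `x_t ∈ 𝐂` of a function `x ∈ C(ℝ,ℝ^d)` (used for functions on
`[-τ,∞)`, extended continuously to `ℝ`). -/
def segF {d : ℕ} (τ : ℝ) (x : C(ℝ, Vec d)) (t : ℝ) : Hist τ d :=
  ⟨fun s => x (t + s.1), x.continuous.comp <| continuous_const.add continuous_subtype_val⟩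

/-- `x` is a solution of the DDE `x(t) = x(0) + ∫₀ᵗ b(x_s) ds`, `t ≥ 0`. -/
def IsDDESol {d : ℕ} (τ : ℝ) (b : Hist τ d → Vec d) (x : C(ℝ, Vec d)) : Prop :=
  ∀ t : ℝ, 0 ≤ t → x t = x 0 + ∫ s in (0:ℝ)..t, b (segF τ x s)

/-- `x` is a periodic solution of the DDE with period `p`. -/
def IsPeriodicSol {d : ℕ} (τ : ℝ) (b : Hist τ d → Vec d) (x : C(ℝ, Vec d)) (p : ℝ) : Prop :=
  IsDDESol τ b x ∧ 0 < p ∧ ∀ t : ℝ, -τ ≤ t → x (t + p) = x t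

/-- The orbit `𝐎 = {x*_t : t ∈ [0,p)} ⊂ 𝐂` of a periodic solution. -/
def orbit {d : ℕ} (τ : ℝ) (x : C(ℝ, Vec d)) (p : ℝ) : Set (Hist τ d) :=
  (segF τ x) '' Ico 0 p

/-- Uniform ellipticity of `a = σσ'`: `ν' a(φ) ν ≥ c |ν|²`. -/
def UnifElliptic {d : ℕ} {τ : ℝ} (σ' : Hist τ d → Matrix (Fin d) (Fin d) ℝ) (c : ℝ) : Prop :=
  ∀ (φ : Hist τ d) (ν : Fin d → ℝ),
    c * (∑ i, ν i ^ 2) ≤ dotProduct ν ((σ' φ * Matrix.transpose (σ' φ)).mulVec ν)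


/-!
Let `T₁` be the time after which the free flow started anywhere in `cl 𝐁(𝐃,η₁) ⊆ 𝐁(𝐃,η₀)` is
`δ`-close to `𝐎`, where `2δ = μ - η₁`. A path of `F_T^{η₁}` keeps distance `≥ 2δ` from `𝐎`, so at
the end of every time window of length `T₁` it is at least `δ` away from the free solution started
at the beginning of the window. Grönwall's inequality for the delay equation bounds that deviation
by `K e^{L T₁} ∫ |u|` over the window, where `L` is the Lipschitz constant of `b` and `K` bounds `σ`
on the bounded set `cl 𝐁(𝐃,η₁)`. By Cauchy–Schwarz every window therefore costs energy at least
`δ² / (K² e^{2 L T₁} T₁)`, and the energy of a path grows linearly in the number of windows.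
-/

open scoped Matrix.Norms.Frobenius NNReal

section Coefficients

variable {d m : ℕ}

lemma frobSq_eq_norm_sq (M : Matrix (Fin d) (Fin m) ℝ) : frobSq M = ‖M‖ ^ 2 := by
  rw [Matrix.frobenius_norm_def, ← Real.sqrt_eq_rpow, Real.sq_sqrt (by positivity)]
  simp [frobSq]

lemma norm_matVec_le (M : Matrix (Fin d) (Fin m) ℝ) (v : Vec m) :
    ‖matVec M v‖ ≤ ‖M‖ * ‖v‖ :=
  calc ‖matVec M v‖ = ‖Matrix.replicateCol (Fin 1) (M.mulVec v.ofLp)‖ :=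
        (Matrix.frobenius_norm_replicateCol _).symm
    _ ≤ ‖M‖ * ‖Matrix.replicateCol (Fin 1) v.ofLp‖ := by
        rw [Matrix.replicateCol_mulVec]
        exact Matrix.frobenius_norm_mul _ _
    _ = ‖M‖ * ‖v‖ := congrArg (‖M‖ * ·) (Matrix.frobenius_norm_replicateCol _)

lemma continuous_matVec :
    Continuous fun p : Matrix (Fin d) (Fin m) ℝ × Vec m => matVec p.1 p.2 := by
  unfold matVec
  fun_prop

lemma le_sqrt_mul_of_sq_le {a c κ : ℝ} (hc : 0 ≤ c) (h : a ^ 2 ≤ κ * c ^ 2) : a ≤ √κ * c :=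
  calc a ≤ √(κ * c ^ 2) := (le_abs_self a).trans (Real.abs_le_sqrt h)
    _ = √κ * c := by rw [Real.sqrt_mul' _ (sq_nonneg c), Real.sqrt_sq hc]

namespace LipCoeff

variable {τ κ₁ : ℝ} {b : Hist τ d → Vec d} {σ' : Hist τ d → Matrix (Fin d) (Fin m) ℝ}

lemma lipschitzWith_drift (h : LipCoeff b σ' κ₁) : LipschitzWith (Real.toNNReal √κ₁) b :=
  LipschitzWith.of_dist_le_mul fun φ ψ => by
    rw [Real.coe_toNNReal _ (Real.sqrt_nonneg _), dist_eq_norm, dist_eq_norm]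
    refine le_sqrt_mul_of_sq_le (norm_nonneg _) ((le_add_of_nonneg_right ?_).trans (h φ ψ))
    rw [frobSq_eq_norm_sq]
    positivity

lemma lipschitzWith_diffusion (h : LipCoeff b σ' κ₁) :
    LipschitzWith (Real.toNNReal √κ₁) σ' :=
  LipschitzWith.of_dist_le_mul fun φ ψ => by
    rw [Real.coe_toNNReal _ (Real.sqrt_nonneg _), dist_eq_norm, dist_eq_norm]
    refine le_sqrt_mul_of_sq_le (norm_nonneg _)
      ((le_add_of_nonneg_left (sq_nonneg ‖b φ - b ψ‖)).trans ?_)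
    simpa [frobSq_eq_norm_sq] using h φ ψ

end LipCoeff

end Coefficients

section Neighbourhoods

variable {X : Type*} [PseudoMetricSpace X] {D : Set X}

lemma infDist_le_of_mem_closure_setOf_infDist_lt {η : ℝ} {ψ : X}
    (hψ : ψ ∈ closure {ψ | infDist ψ D < η}) : infDist ψ D ≤ η :=
  closure_minimal (fun _ h => le_of_lt h)
    (isClosed_le (continuous_infDist_pt D) continuous_const) hψ

lemma isBounded_closure_setOf_infDist_lt (hD : Bornology.IsBounded D) (hne : D.Nonempty)
    (η : ℝ) : Bornology.IsBounded (closure {ψ | infDist ψ D < η}) :=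
  (hD.thickening.subset fun _ h => (mem_thickening_iff_infDist_lt hne).2 h).closure

end Neighbourhoods

section RealIntegrals

theorem le_mul_exp_of_le_mul_integral_add_s14 {N : ℝ → ℝ} {L A T : ℝ} (hN : Continuous N)
    (hL : 0 ≤ L) (hT : 0 ≤ T) (h : ∀ t ∈ Icc 0 T, N t ≤ L * (∫ s in 0..t, N s) + A) :
    N T ≤ A * Real.exp (L * T) := by
  have hG : ∀ t, HasDerivAt (fun t => ∫ s in 0..t, N s) (N t) t := fun t =>
    hN.integral_hasStrictDerivAt 0 t |>.hasDerivAt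
  have hbound := le_gronwallBound_of_liminf_deriv_right_le (δ := 0) (K := L) (ε := A) (b := T)
    (fun t _ => (hG t).continuousAt.continuousWithinAt)
    (fun t _ r hr => (hG t).hasDerivWithinAt.liminf_right_slope_le hr) (by simp)
    (fun t ht => h t (Ico_subset_Icc_self ht)) T ⟨hT, le_rfl⟩
  have hexp : L * gronwallBound 0 L A T + A = A * Real.exp (L * T) := by
    rcases eq_or_ne L 0 with rfl | hL0
    · simp [gronwallBound_K0]
    · rw [gronwallBound_of_K_ne_0 hL0]
      field_simp
      ring
  calc N T ≤ L * (∫ s in 0..T, N s) + A := h T ⟨hT, le_rfl⟩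
    _ ≤ L * gronwallBound 0 L A T + A := by
      gcongr
      simpa using hbound
    _ = A * Real.exp (L * T) := hexp

theorem sq_intervalIntegral_le {f : ℝ → ℝ} {a b : ℝ} (hab : a ≤ b)
    (hf : IntervalIntegrable f volume a b)
    (hf2 : IntervalIntegrable (fun t => f t ^ 2) volume a b) :
    (∫ t in a..b, f t) ^ 2 ≤ (b - a) * ∫ t in a..b, f t ^ 2 := by
  have hAMGM : ∀ c, 2 * c * (∫ t in a..b, f t) ≤ c ^ 2 * (b - a) + ∫ t in a..b, f t ^ 2 := by
    intro c
    have h := intervalIntegral.integral_mono_on hab (hf.const_mul (2 * c))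
      ((intervalIntegrable_const (c := c ^ 2)).add hf2) fun t _ => by
        nlinarith [sq_nonneg (f t - c)]
    rwa [intervalIntegral.integral_const_mul,
      intervalIntegral.integral_add intervalIntegrable_const hf2, intervalIntegral.integral_const,
      smul_eq_mul, mul_comm (b - a)] at h
  rcases hab.eq_or_lt with rfl | hlt
  · simp
  · set I := ∫ t in a..b, f t
    -- the optimal choice of `c` in the AM–GM bound
    have h := hAMGM (I / (b - a))
    have hc : I / (b - a) * (b - a) = I := div_mul_cancel₀ I (sub_pos.2 hlt).ne'
    nlinarith [sub_pos.2 hlt]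

theorem natCast_mul_le_integral_of_le_windows {f : ℝ → ℝ} {T₁ c : ℝ} (hT₁ : 0 ≤ T₁) (n : ℕ)
    (hf : IntervalIntegrable f volume 0 (n * T₁))
    (h : ∀ k < n, c ≤ ∫ t in k * T₁..(k + 1) * T₁, f t) :
    n * c ≤ ∫ t in 0..n * T₁, f t := by
  induction n with
  | zero => simp
  | succ n ih =>
    have hmem : (n : ℝ) * T₁ ∈ uIcc 0 ((n + 1 : ℕ) * T₁) :=
      mem_uIcc_of_le (by positivity) (by push_cast; nlinarith)
    have hinit := hf.mono_set (uIcc_subset_uIcc_left hmem)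
    have hlast := hf.mono_set (uIcc_subset_uIcc_right hmem)
    rw [← intervalIntegral.integral_add_adjacent_intervals hinit hlast]
    have := ih hinit fun k hk => h k (by omega)
    have := h n (by omega)
    push_cast at this ⊢
    linarith

variable {E : Type*} [NormedAddCommGroup E] {u : ℝ → E} {S T a c : ℝ}

lemma MeasureTheory.MemLp.intervalIntegrable_norm (hu : MemLp u 2 (volume.restrict (Icc S T)))
    (ha : S ≤ a) (hac : a ≤ c) (hc : c ≤ T) : IntervalIntegrable (fun r => ‖u r‖) volume a c :=
  (IntegrableOn.mono_set (hu.integrable one_le_two).norm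
    (uIcc_subset_Icc ⟨ha, hac.trans hc⟩ ⟨ha.trans hac, hc⟩)).intervalIntegrable

lemma MeasureTheory.MemLp.intervalIntegrable_norm_sq
    (hu : MemLp u 2 (volume.restrict (Icc S T))) (ha : S ≤ a) (hac : a ≤ c) (hc : c ≤ T) :
    IntervalIntegrable (fun r => ‖u r‖ ^ 2) volume a c :=
  (IntegrableOn.mono_set (hu.integrable_norm_pow two_ne_zero)
    (uIcc_subset_Icc ⟨ha, hac.trans hc⟩ ⟨ha.trans hac, hc⟩)).intervalIntegrable

end RealIntegrals

section Segments

variable {d : ℕ} {τ : ℝ}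

lemma continuous_seg_s14 {T : ℝ} (hT : -τ ≤ T) (x : Traj τ T d) : Continuous (seg hT x) :=
  ContinuousMap.continuous_of_continuous_uncurry _ <|
    x.continuous.comp <| continuous_projIcc.comp <|
      continuous_fst.add (continuous_subtype_val.comp continuous_snd)

lemma continuous_segF (y : C(ℝ, Vec d)) : Continuous (segF τ y) :=
  ContinuousMap.continuous_of_continuous_uncurry _ <|
    y.continuous.comp <| continuous_fst.add (continuous_subtype_val.comp continuous_snd)

theorem norm_segF_le_of_le_integral {z : C(ℝ, Vec d)} {L A T : ℝ} (hL : 0 ≤ L) (hT : 0 ≤ T)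
    (hz : ∀ s ∈ Icc (-τ) 0, z s = 0)
    (h : ∀ t ∈ Icc 0 T, ‖z t‖ ≤ L * (∫ s in 0..t, ‖segF τ z s‖) + A) :
    ‖segF τ z T‖ ≤ A * Real.exp (L * T) := by
  set N := fun s => ‖segF τ z s‖
  have hN : Continuous N := (continuous_segF z).norm
  have hA : 0 ≤ A := by simpa using (norm_nonneg _).trans (h 0 ⟨le_rfl, hT⟩)
  refine le_mul_exp_of_le_mul_integral_add_s14 hN hL hT fun t ht => ?_
  have hG : ∀ r ∈ Icc 0 t, 0 ≤ ∫ s in 0..r, N s ∧ ∫ s in 0..r, N s ≤ ∫ s in 0..t, N s :=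
    fun r hr => ⟨intervalIntegral.integral_nonneg hr.1 fun _ _ => norm_nonneg _,
      intervalIntegral.integral_mono_interval le_rfl hr.1 hr.2
        (ae_of_all _ fun _ => norm_nonneg _) (hN.intervalIntegrable _ _)⟩
  have hGt := (hG t ⟨ht.1, le_rfl⟩).1
  refine (ContinuousMap.norm_le _ (by positivity)).2 fun ⟨s, hs⟩ => ?_
  change ‖z (t + s)‖ ≤ _
  rcases le_or_gt 0 (t + s) with hts | hts
  · have hGts := (hG (t + s) ⟨hts, by linarith [hs.2]⟩).2
    calc ‖z (t + s)‖ ≤ L * (∫ r in 0..t + s, N r) + A := h _ ⟨hts, by linarith [hs.2, ht.2]⟩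
      _ ≤ L * (∫ r in 0..t, N r) + A := by gcongr
  · rw [hz (t + s) ⟨by linarith [hs.1, ht.1], hts.le⟩, norm_zero]
    positivity

theorem dist_segF_le_of_perturbation {b : Hist τ d → Vec d} {L : ℝ≥0} (hb : LipschitzWith L b)
    (hτ : 0 ≤ τ) {X y : C(ℝ, Vec d)} {g : ℝ → Vec d} {T : ℝ} (hT : 0 ≤ T)
    (hg : IntervalIntegrable g volume 0 T)
    (hX : ∀ t ∈ Icc 0 T, X t = X 0 + (∫ r in 0..t, b (segF τ X r)) + ∫ r in 0..t, g r)
    (hy : IsDDESol τ b y) (h0 : segF τ y 0 = segF τ X 0) :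
    dist (segF τ X T) (segF τ y T) ≤ (∫ r in 0..T, ‖g r‖) * Real.exp (L * T) := by
  have hseg : ∀ t, segF τ (X - y) t = segF τ X t - segF τ y t := fun t => rfl
  have hzero : ∀ s ∈ Icc (-τ) 0, (X - y) s = 0 := fun s hs => by
    simpa [segF, sub_eq_zero] using (congrArg (fun φ : Hist τ d => φ ⟨s, hs⟩) h0).symm
  have hbX : Continuous fun r => b (segF τ X r) := hb.continuous.comp (continuous_segF X)
  have hby : Continuous fun r => b (segF τ y r) := hb.continuous.comp (continuous_segF y)
  rw [dist_eq_norm, ← hseg]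
  refine norm_segF_le_of_le_integral L.2 hT hzero fun t ht => ?_
  have hz : (X - y) t =
      (∫ r in 0..t, (b (segF τ X r) - b (segF τ y r))) + ∫ r in 0..t, g r := by
    have h00 : X 0 = y 0 := sub_eq_zero.1 (hzero 0 ⟨by linarith, le_rfl⟩)
    rw [ContinuousMap.sub_apply, hX t ht, hy t ht.1, h00,
      intervalIntegral.integral_sub (hbX.intervalIntegrable _ _) (hby.intervalIntegrable _ _)]
    abel
  rw [hz]
  refine (norm_add_le _ _).trans (add_le_add ?_ ?_)
  · rw [← intervalIntegral.integral_const_mul]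
    refine intervalIntegral.norm_integral_le_of_norm_le ht.1 (ae_of_all _ fun r _ => ?_)
      (((continuous_segF _).norm.const_mul _).intervalIntegrable _ _)
    rw [hseg]
    exact hb.norm_sub_le _ _
  · exact (intervalIntegral.norm_integral_le_integral_norm ht.1).trans
      (intervalIntegral.integral_mono_interval le_rfl ht.1 ht.2
        (ae_of_all _ fun _ => norm_nonneg _) hg.norm)

end Segments

section Controls

variable {d m : ℕ} {τ T : ℝ} {hT : -τ ≤ T} {b : Hist τ d → Vec d}
  {σ' : Hist τ d → Matrix (Fin d) (Fin m) ℝ} {x : Traj τ T d} {u : ℝ → Vec m}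
  {L : ℝ≥0} {K : ℝ}

lemma integrableOn_diffusion (hσ : Continuous σ') (hu : MemLp u 2 (volume.restrict (Icc 0 T))) :
    IntegrableOn (fun r => matVec (σ' (seg hT x r)) (u r)) (Icc 0 T) := by
  have hσx : Continuous fun r => σ' (seg hT x r) := hσ.comp (continuous_seg_s14 hT x)
  -- `Matrix` carries the product topology, but instance search misses its metrizability
  have : TopologicalSpace.PseudoMetrizableSpace (Matrix (Fin d) (Fin m) ℝ) :=
    inferInstanceAs (TopologicalSpace.PseudoMetrizableSpace (Fin d → Fin m → ℝ))
  obtain ⟨C, hC⟩ := isCompact_Icc.exists_bound_of_continuousOn hσx.continuousOn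
  refine Integrable.mono' ((hu.integrable one_le_two).norm.const_mul C)
    (continuous_matVec.comp_aestronglyMeasurable (hσx.aestronglyMeasurable.prodMk hu.1)) ?_
  filter_upwards [ae_restrict_mem measurableSet_Icc] with r hr
  exact (norm_matVec_le _ _).trans (mul_le_mul_of_nonneg_right (hC r hr) (norm_nonneg _))

lemma intervalIntegrable_diffusion (hσ : Continuous σ')
    (hu : MemLp u 2 (volume.restrict (Icc 0 T))) {a c : ℝ} (ha : 0 ≤ a) (hac : a ≤ c)
    (hc : c ≤ T) :
    IntervalIntegrable (fun r => matVec (σ' (seg hT x r)) (u r)) volume a c :=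
  ((integrableOn_diffusion hσ hu).mono_set
    (uIcc_subset_Icc ⟨ha, hac.trans hc⟩ ⟨ha.trans hac, hc⟩)).intervalIntegrable

lemma ev_eq_of_mem_controls (hb : Continuous b) (hσ : Continuous σ')
    (hu : u ∈ controls hT b σ' x) {a c : ℝ} (ha : 0 ≤ a) (hac : a ≤ c) (hc : c ≤ T) :
    ev hT x c = ev hT x a + (∫ r in a..c, b (seg hT x r)) +
      ∫ r in a..c, matVec (σ' (seg hT x r)) (u r) := by
  have hbx : ∀ e, IntervalIntegrable (fun r => b (seg hT x r)) volume 0 e := fun e =>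
    (hb.comp (continuous_seg_s14 hT x)).intervalIntegrable _ _
  rw [← intervalIntegral.integral_interval_sub_left (hbx c) (hbx a),
    ← intervalIntegral.integral_interval_sub_left
      (intervalIntegrable_diffusion hσ hu.1 le_rfl (ha.trans hac) hc)
      (intervalIntegrable_diffusion hσ hu.1 le_rfl ha (hac.trans hc)),
    hu.2 c ⟨ha.trans hac, hc⟩, hu.2 a ⟨ha, hac.trans hc⟩]
  abel

theorem dist_seg_le_of_mem_controls (hb : LipschitzWith L b) (hσ : Continuous σ')
    (hτ : 0 ≤ τ) (hu : u ∈ controls hT b σ' x) {y : C(ℝ, Vec d)} (hy : IsDDESol τ b y)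
    {t₀ T₁ : ℝ} (hy0 : segF τ y 0 = seg hT x t₀) (ht₀ : 0 ≤ t₀) (hT₁ : 0 ≤ T₁)
    (hwin : t₀ + T₁ ≤ T) :
    dist (seg hT x (t₀ + T₁)) (segF τ y T₁) ≤
      (∫ r in t₀..t₀ + T₁, ‖matVec (σ' (seg hT x r)) (u r)‖) * Real.exp (L * T₁) := by
  let X : C(ℝ, Vec d) := ⟨fun t => ev hT x (t₀ + t),
    x.continuous.comp <| continuous_projIcc.comp <| continuous_const.add continuous_id⟩
  have hX : ∀ t, segF τ X t = seg hT x (t₀ + t) := fun t =>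
    ContinuousMap.ext fun s => by simp [X, segF, seg, ev, add_assoc]
  have hshift : ∀ {E : Type} [NormedAddCommGroup E] [NormedSpace ℝ E] (f : ℝ → E) (t : ℝ),
      ∫ r in 0..t, f (t₀ + r) = ∫ r in t₀..t₀ + t, f r := fun f t => by
    rw [intervalIntegral.integral_comp_add_left, add_zero]
  have key := dist_segF_le_of_perturbation hb hτ (X := X)
    (g := fun r => matVec (σ' (seg hT x (t₀ + r))) (u (t₀ + r))) hT₁ ?_ ?_ hy
    (by rw [hX, add_zero, hy0])
  · rwa [hX, hshift (fun r => ‖matVec (σ' (seg hT x r)) (u r)‖)] at key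
  · have := (intervalIntegrable_diffusion hσ hu.1 ht₀ (by linarith) hwin).comp_add_left t₀
    simpa using this
  · intro t ht
    simp_rw [hX, hshift (fun r => b (seg hT x r)),
      hshift (fun r => matVec (σ' (seg hT x r)) (u r))]
    change ev hT x (t₀ + t) = ev hT x (t₀ + 0) + _ + _
    rw [add_zero]
    exact ev_eq_of_mem_controls hb.continuous hσ hu ht₀ (by linarith [ht.1]) (by linarith [ht.2])

theorem dist_seg_sq_le_of_mem_controls (hb : LipschitzWith L b) (hσ : Continuous σ')
    (hτ : 0 ≤ τ) (hu : u ∈ controls hT b σ' x) (hK : ∀ s ∈ Icc 0 T, ‖σ' (seg hT x s)‖ ≤ K)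
    {y : C(ℝ, Vec d)} (hy : IsDDESol τ b y) {t₀ T₁ : ℝ} (hy0 : segF τ y 0 = seg hT x t₀)
    (ht₀ : 0 ≤ t₀) (hT₁ : 0 ≤ T₁) (hwin : t₀ + T₁ ≤ T) :
    dist (seg hT x (t₀ + T₁)) (segF τ y T₁) ^ 2 ≤
      (K * Real.exp (L * T₁)) ^ 2 * T₁ * ∫ r in t₀..t₀ + T₁, ‖u r‖ ^ 2 := by
  have hwin' : t₀ ≤ t₀ + T₁ := by linarith
  have hσu : ∫ r in t₀..t₀ + T₁, ‖matVec (σ' (seg hT x r)) (u r)‖ ≤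
      K * ∫ r in t₀..t₀ + T₁, ‖u r‖ := by
    rw [← intervalIntegral.integral_const_mul]
    refine intervalIntegral.integral_mono_on hwin'
      (intervalIntegrable_diffusion hσ hu.1 ht₀ hwin' hwin).norm
      ((MemLp.intervalIntegrable_norm hu.1 ht₀ hwin' hwin).const_mul K) fun r hr => ?_
    exact (norm_matVec_le _ _).trans <| mul_le_mul_of_nonneg_right
      (hK r ⟨ht₀.trans hr.1, hr.2.trans hwin⟩) (norm_nonneg _)
  have hCS := sq_intervalIntegral_le hwin' (MemLp.intervalIntegrable_norm hu.1 ht₀ hwin' hwin)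
    (MemLp.intervalIntegrable_norm_sq hu.1 ht₀ hwin' hwin)
  rw [add_sub_cancel_left] at hCS
  calc dist (seg hT x (t₀ + T₁)) (segF τ y T₁) ^ 2
      ≤ ((∫ r in t₀..t₀ + T₁, ‖matVec (σ' (seg hT x r)) (u r)‖) * Real.exp (L * T₁)) ^ 2 := by
        gcongr
        exact dist_seg_le_of_mem_controls hb hσ hτ hu hy hy0 ht₀ hT₁ hwin
    _ ≤ (K * (∫ r in t₀..t₀ + T₁, ‖u r‖) * Real.exp (L * T₁)) ^ 2 :=
        pow_le_pow_left₀ (mul_nonneg (intervalIntegral.integral_nonneg hwin' fun _ _ =>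
          norm_nonneg _) (Real.exp_pos _).le) (by gcongr) 2
    _ = (K * Real.exp (L * T₁)) ^ 2 * (∫ r in t₀..t₀ + T₁, ‖u r‖) ^ 2 := by ring
    _ ≤ (K * Real.exp (L * T₁)) ^ 2 * T₁ * ∫ r in t₀..t₀ + T₁, ‖u r‖ ^ 2 := by
        rw [mul_assoc]
        gcongr

theorem natCast_mul_sq_le_integral_norm_sq (hb : LipschitzWith L b) (hσ : Continuous σ')
    (hτ : 0 ≤ τ) (hu : u ∈ controls hT b σ' x) (hK : ∀ s ∈ Icc 0 T, ‖σ' (seg hT x s)‖ ≤ K)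
    {δ T₁ : ℝ} (hδ : 0 ≤ δ) (hT₁ : 0 ≤ T₁) {n : ℕ} (hn : n * T₁ ≤ T)
    (hdev : ∀ t₀, 0 ≤ t₀ → t₀ + T₁ ≤ T → ∃ y, IsDDESol τ b y ∧ segF τ y 0 = seg hT x t₀ ∧
      δ ≤ dist (seg hT x (t₀ + T₁)) (segF τ y T₁)) :
    n * δ ^ 2 ≤ (K * Real.exp (L * T₁)) ^ 2 * T₁ * ∫ r in 0..T, ‖u r‖ ^ 2 := by
  set C := (K * Real.exp (L * T₁)) ^ 2 * T₁
  have hnT : 0 ≤ n * T₁ := by positivity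
  have hu2 := MemLp.intervalIntegrable_norm_sq hu.1 le_rfl hnT hn
  have hwindows := natCast_mul_le_integral_of_le_windows hT₁ n (hu2.const_mul C) fun k hk => by
    have hwin : (k : ℝ) * T₁ + T₁ ≤ T := by
      have : ((k : ℝ) + 1) * T₁ ≤ n * T₁ := by gcongr; exact_mod_cast hk
      linarith
    obtain ⟨y, hy, hy0, hδy⟩ := hdev (k * T₁) (by positivity) hwin
    rw [intervalIntegral.integral_const_mul, add_one_mul]
    exact (pow_le_pow_left₀ hδ hδy 2).trans
      (dist_seg_sq_le_of_mem_controls hb hσ hτ hu hK hy hy0 (by positivity) hT₁ hwin)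
  rw [intervalIntegral.integral_const_mul] at hwindows
  refine hwindows.trans (mul_le_mul_of_nonneg_left ?_ (by positivity))
  exact intervalIntegral.integral_mono_interval le_rfl hnT hn (ae_of_all _ fun _ => sq_nonneg _)
    (MemLp.intervalIntegrable_norm_sq hu.1 le_rfl (hnT.trans hn) le_rfl)

lemma ofReal_le_rateAt {φ : Hist τ d} {c : ℝ}
    (h : ∀ u ∈ controls hT b σ' x, c ≤ 1 / 2 * ∫ s in 0..T, ‖u s‖ ^ 2) :
    ENNReal.ofReal c ≤ rateAt hT b σ' φ x := by
  unfold rateAt rate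
  split_ifs
  · exact le_iInf₂ fun u hu => ENNReal.ofReal_le_ofReal (h u hu)
  · exact le_top

end Controls

theorem stmt_14_general {d m : ℕ} {τ : ℝ} (hτ : 0 < τ)
    (b : Hist τ d → Vec d) (σ' : Hist τ d → Matrix (Fin d) (Fin m) ℝ)
    {κ₁ : ℝ} (hlip : LipCoeff b σ' κ₁)
    (xs : C(ℝ, Vec d)) (p : ℝ) (hxs : IsPeriodicSol τ b xs p)
    -- the solution semiflow of the DDE: `sol φ` is the solution with initial condition `φ`
    (sol : Hist τ d → C(ℝ, Vec d))
    (hsol : ∀ φ : Hist τ d, IsDDESol τ b (sol φ) ∧ segF τ (sol φ) 0 = φ)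
    (D : Set (Hist τ d))
    (hDbdd : Bornology.IsBounded D) (hOD : orbit τ xs p ⊆ D)
    (η₀ : ℝ)
    -- `𝐁(𝐃,η₀)` is uniformly attracted to `𝐎`
    (hattr : ∀ δ : ℝ, 0 < δ → ∃ T : ℝ, 0 < T ∧
      ∀ φ : Hist τ d, infDist φ D < η₀ →
        ∀ t : ℝ, T ≤ t → infDist (segF τ (sol φ) t) (orbit τ xs p) ≤ δ)
    (μ η₁ : ℝ) (hη₁μ : η₁ < μ) (hη₁η₀ : η₁ < η₀)
    (M : ℝ) (hM : 0 < M) :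
    ∃ T₀ : ℝ, 0 < T₀ ∧ ∀ T : ℝ, T₀ ≤ T → ∀ hT : -τ ≤ T,
      ENNReal.ofReal M <
        ⨅ (φ : Hist τ d) (_ : infDist φ (orbit τ xs p) = 2 * μ),
          ⨅ (x : Traj τ T d)
            (_ : ∀ t ∈ Icc (0:ℝ) T,
              seg hT x t ∈
                  closure {ψ : Hist τ d | infDist ψ D < η₁} ∧
                ¬ infDist (seg hT x t) (orbit τ xs p) < μ - η₁),
            rateAt hT b σ' φ x := by
  have hD : D.Nonempty := ⟨segF τ xs 0, hOD ⟨0, ⟨le_rfl, hxs.2.1⟩, rfl⟩⟩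
  obtain ⟨K, hK0, hK⟩ := (hlip.lipschitzWith_diffusion.isBounded_image
    (isBounded_closure_setOf_infDist_lt hDbdd hD η₁)).exists_pos_norm_le
  obtain ⟨δ, hδ, hδμ⟩ : ∃ δ, 0 < δ ∧ 2 * δ = μ - η₁ := ⟨(μ - η₁) / 2, by linarith, by ring⟩
  obtain ⟨T₁, hT₁, hflow⟩ := hattr δ hδ
  set C := (K * Real.exp (Real.toNNReal √κ₁ * T₁)) ^ 2 * T₁
  obtain ⟨n, hn⟩ := exists_nat_gt (2 * M * C / δ ^ 2)
  have hn0 : (0 : ℝ) < n := lt_trans (by positivity) hn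
  refine ⟨n * T₁, by positivity, fun T hTT hT => ?_⟩
  have hM' : M < n * δ ^ 2 / (2 * C) := by
    rw [div_lt_iff₀ (by positivity)] at hn
    rw [lt_div_iff₀ (by positivity)]
    linarith
  refine ((ENNReal.ofReal_lt_ofReal_iff (hM.trans hM')).2 hM').trans_le <|
    le_iInf₂ fun φ _ => le_iInf₂ fun x hx => ofReal_le_rateAt fun u hu => ?_
  have hE := natCast_mul_sq_le_integral_norm_sq hlip.lipschitzWith_drift
    hlip.lipschitzWith_diffusion.continuous hτ.le hu
    (fun s hs => hK _ (mem_image_of_mem σ' (hx s hs).1)) hδ.le hT₁.le hTT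
    fun t₀ ht₀ hwin => ⟨sol _, (hsol _).1, (hsol _).2, by
      have hfar := not_lt.1 (hx (t₀ + T₁) ⟨by linarith, hwin⟩).2
      have hnear := hflow _ ((infDist_le_of_mem_closure_setOf_infDist_lt
        (hx t₀ ⟨ht₀, by linarith⟩).1).trans_lt hη₁η₀) T₁ le_rfl
      linarith [infDist_le_infDist_add_dist (x := seg hT x (t₀ + T₁))
        (y := segF τ (sol (seg hT x t₀)) T₁) (s := orbit τ xs p)]⟩
  rw [div_le_iff₀ (by positivity)]
  linarith

/-- key step of Lemma 6.5: the energy needed to stay in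
`cl(𝐁(𝐃,η₁)) \ 𝐁(𝐎,μ−η₁)` for time `T` tends to `∞` as `T → ∞`, uniformly over initial
conditions on the sphere `𝐒(𝐎,2μ)`. -/
theorem stmt_14 {d m : ℕ} (hd : 0 < d) (hm : 0 < m) {τ : ℝ} (hτ : 0 < τ)
    (b : Hist τ d → Vec d) (σ' : Hist τ d → Matrix (Fin d) (Fin m) ℝ)
    {κ₁ : ℝ} (hκ₁ : 0 < κ₁) (hlip : LipCoeff b σ' κ₁)
    (xs : C(ℝ, Vec d)) (p : ℝ) (hxs : IsPeriodicSol τ b xs p)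
    -- the solution semiflow of the DDE: `sol φ` is the solution with initial condition `φ`
    (sol : Hist τ d → C(ℝ, Vec d))
    (hsol : ∀ φ : Hist τ d, IsDDESol τ b (sol φ) ∧ segF τ (sol φ) 0 = φ)
    (D : Set (Hist τ d)) (hDopen : IsOpen D) (hDconn : IsConnected D)
    (hDbdd : Bornology.IsBounded D) (hOD : orbit τ xs p ⊆ D)
    (η₀ : ℝ) (hη₀ : 0 < η₀)
    -- `𝐁(𝐃,η₀)` is uniformly attracted to `𝐎`
    (hattr : ∀ δ : ℝ, 0 < δ → ∃ T : ℝ, 0 < T ∧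
      ∀ φ : Hist τ d, infDist φ D < η₀ →
        ∀ t : ℝ, T ≤ t → infDist (segF τ (sol φ) t) (orbit τ xs p) ≤ δ)
    (μ η₁ : ℝ) (hμ : 0 < μ) (hη₁ : 0 < η₁) (hη₁μ : η₁ < μ) (hη₁η₀ : η₁ < η₀)
    (M : ℝ) (hM : 0 < M) :
    ∃ T₀ : ℝ, 0 < T₀ ∧ ∀ T : ℝ, T₀ ≤ T → ∀ hT : -τ ≤ T,
      ENNReal.ofReal M <
        ⨅ (φ : Hist τ d) (_ : infDist φ (orbit τ xs p) = 2 * μ),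
          ⨅ (x : Traj τ T d)
            (_ : ∀ t ∈ Icc (0:ℝ) T,
              seg hT x t ∈
                  closure {ψ : Hist τ d | infDist ψ D < η₁} ∧
                ¬ infDist (seg hT x t) (orbit τ xs p) < μ - η₁),
            rateAt hT b σ' φ x :=
  stmt_14_general hτ b σ' hlip xs p hxs sol hsol D hDbdd hOD η₀ hattr μ η₁ hη₁μ hη₁η₀ M hM
end
end
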